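/- Let K be a regular incidence complex of rank n ≥ 1 with flag-transitive subgroup Γ ≤ Aut(K), base flag Φ, and distinguished generating subgroups R_{-1},...,R_n. For I ⊆ {-1,0,...,n} let Γ_I := ⟨R_i : i ∈ I⟩ (with Γ_∅ := R_{-1}). Then for all I, J ⊆ {-1,0,...,n}: Γ_I ∩ Γ_J = Γ_{I∩J}. -/

import Mathlib

open Set Pointwise

/-- `Φ` is a flag of the subset `s` of the poset `α`: a chain contained in `s`
that is maximal among chains contained in `s`. -/
def IsFlagOf {α : Type*} [PartialOrder α] (s Φ : Set α) : Prop :=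
  Φ ⊆ s ∧ IsChain (· ≤ ·) Φ ∧
    ∀ Ψ : Set α, Ψ ⊆ s → IsChain (· ≤ ·) Ψ → Φ ⊆ Ψ → Ψ = Φ

/-- Two flags are adjacent if each differs from the other in exactly one face. -/
def FlagAdj {α : Type*} [PartialOrder α] (Φ Ψ : Set α) : Prop :=
  (Φ \ Ψ).ncard = 1 ∧ (Ψ \ Φ).ncard = 1

/-- The set `s` is flag-connected: any two flags of `s` are joined by a sequence
of successively adjacent flags of `s`. -/
def FlagConnIn {α : Type*} [PartialOrder α] (s : Set α) : Prop :=
  ∀ Φ Ψ : Set α, IsFlagOf s Φ → IsFlagOf s Ψ →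
    Relation.ReflTransGen
      (fun A B => IsFlagOf s A ∧ IsFlagOf s B ∧ FlagAdj A B) Φ Ψ

/-- The section between `F` and `G` is connected: any two of its proper faces are
joined by a finite sequence of successively incident proper faces of the section. -/
def ConnIn {α : Type*} [PartialOrder α] (F G : α) : Prop :=
  ∀ H K : α, F < H → H < G → F < K → K < G →
    Relation.ReflTransGen
      (fun a b => F < a ∧ a < G ∧ F < b ∧ b < G ∧ (a ≤ b ∨ b ≤ a)) H K

/-- An incidence complex of rank `n`: a bounded ranked poset (rank function `rk`
with range `{-1,…,n}`, strictly monotone, all flags having `n+2` elements hitting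
every rank), strongly connected (I3), and with at least two `i`-faces between any
incident pair of faces of ranks `i-1` and `i+1` (I4). -/
structure IncComplex (α : Type*) [PartialOrder α] [BoundedOrder α]
    (n : ℤ) (rk : α → ℤ) : Prop where
  rk_bot : rk (⊥ : α) = -1
  rk_top : rk (⊤ : α) = n
  rk_strictMono : ∀ a b : α, a < b → rk a < rk b
  chain_flag : ∀ c : Set α, IsChain (· ≤ ·) c →
    ∃ Φ : Set α, c ⊆ Φ ∧ IsFlagOf Set.univ Φ ∧ Φ.ncard = (n + 2).toNat
  flag_rk : ∀ Φ : Set α, IsFlagOf Set.univ Φ →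
    ∀ i ∈ Set.Icc (-1 : ℤ) n, ∃ a ∈ Φ, rk a = i
  strong_conn : ∀ F G : α, F ≤ G → 2 ≤ rk G - rk F - 1 → ConnIn F G
  two_between : ∀ F G : α, F < G → rk G = rk F + 2 →
    ∃ H H' : α, H ≠ H' ∧ F < H ∧ H < G ∧ F < H' ∧ H' < G

/-- A complex is regular if its automorphism group acts transitively on flags. -/
def IsRegularIC (α : Type*) [PartialOrder α] : Prop :=
  ∀ Φ Ψ : Set α, IsFlagOf Set.univ Φ → IsFlagOf Set.univ Ψ →
    ∃ g : α ≃o α, ⇑g '' Φ = Ψ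

/-- `Γ` is a flag-transitive subgroup of the automorphism group. -/
def FlagTrans {α : Type*} [PartialOrder α] (Γ : Subgroup (α ≃o α)) : Prop :=
  ∀ Φ Ψ : Set α, IsFlagOf Set.univ Φ → IsFlagOf Set.univ Ψ →
    ∃ g ∈ Γ, ⇑g '' Φ = Ψ

/-- The distinguished generating subset `R_i`: the stabilizer in `Γ` of
`Φ \ {F_i}`, where `F` enumerates the base flag by rank. -/
def Rset {α : Type*} [PartialOrder α] (Γ : Subgroup (α ≃o α)) (F : ℤ → α)
    (n i : ℤ) : Set (α ≃o α) :=
  {g | g ∈ Γ ∧ ∀ j ∈ Set.Icc (-1 : ℤ) n, j ≠ i → g (F j) = F j}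

/-- The distinguished subgroup `Γ_I = ⟨R_i : i ∈ I⟩` (with `Γ_∅ = R_{-1}`). -/
def GammaI {α : Type*} [PartialOrder α] (Γ : Subgroup (α ≃o α)) (F : ℤ → α)
    (n : ℤ) (I : Set ℤ) : Subgroup (α ≃o α) :=
  Subgroup.closure (Rset Γ F n (-1) ∪ ⋃ i ∈ I, Rset Γ F n i)

/-!
`Γ_I` is the stabilizer in `Γ` of the chain `{F j | j ∉ I}` of the base flag; since the pointwise
stabilizer of a union is the intersection of the stabilizers, the intersection property follows.
The generators visibly fix that chain. Conversely, the flags through any chain `C` are connected by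
steps that change only the face of one rank missing from `C` (by induction on the number of
missing ranks: across a gap of length two the missing face is exchanged directly, across a longer
gap strong connectivity of the section supplies a path of incident faces). Starting at the base
flag, flag-transitivity realizes each step at rank `i` by an element of `R_i`, so `Γ_I` acts
transitively on the flags through `{F j | j ∉ I}`; an element of the stabilizer then differs from
an element of `Γ_I` by one fixing the base flag, which lies in `R_{-1}`.
-/

open Relation

section Chains
variable {α β : Type*} [PartialOrder α] [LinearOrder β] {rk : α → β} {s : Set α} {a b x : α}

theorem IsChain.le_of_rk_le (hrk : StrictMono rk) (hs : IsChain (· ≤ ·) s) (ha : a ∈ s)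
    (hb : b ∈ s) (h : rk a ≤ rk b) : a ≤ b :=
  (hs.total ha hb).elim id fun hba =>
    hba.lt_or_eq.elim (fun hlt => absurd (hrk hlt) h.not_gt) Eq.ge

theorem IsChain.lt_of_rk_lt (hrk : StrictMono rk) (hs : IsChain (· ≤ ·) s) (ha : a ∈ s)
    (hb : b ∈ s) (h : rk a < rk b) : a < b :=
  (hs.le_of_rk_le hrk ha hb h.le).lt_of_ne (by rintro rfl; exact h.false)

theorem IsChain.eq_of_rk_eq (hrk : StrictMono rk) (hs : IsChain (· ≤ ·) s) (ha : a ∈ s)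
    (hb : b ∈ s) (h : rk a = rk b) : a = b :=
  (hs.le_of_rk_le hrk ha hb h.le).antisymm (hs.le_of_rk_le hrk hb ha h.ge)

theorem IsChain.insert_of_gap (hs : IsChain (· ≤ ·) s) (hgap : ∀ c ∈ s, c ≤ a ∨ b ≤ c)
    (hax : a < x) (hxb : x < b) : IsChain (· ≤ ·) (insert x s) :=
  hs.insert fun c hc _ =>
    (hgap c hc).elim (fun h => Or.inr (h.trans hax.le)) fun h => Or.inl (hxb.le.trans h)

theorem notMem_of_gap (hgap : ∀ c ∈ s, c ≤ a ∨ b ≤ c) (hax : a < x) (hxb : x < b) : x ∉ s :=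
  fun hx => (hgap x hx).elim hax.not_ge hxb.not_ge

end Chains

section Flags
variable {α : Type*} [PartialOrder α] {Φ Ψ : Set α}

theorem IsFlagOf.isMaxChain (hΦ : IsFlagOf univ Φ) : IsMaxChain (· ≤ ·) Φ :=
  ⟨hΦ.2.1, fun Ψ hΨ hΦΨ => (hΦ.2.2 Ψ (subset_univ Ψ) hΨ hΦΨ).symm⟩

theorem IsMaxChain.isFlagOf (hΦ : IsMaxChain (· ≤ ·) Φ) : IsFlagOf univ Φ :=
  ⟨subset_univ Φ, hΦ.1, fun _ _ hΨ hΦΨ => (hΦ.2 hΨ hΦΨ).symm⟩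

theorem IsFlagOf.eq_of_subset (hΦ : IsFlagOf univ Φ) (hΨ : IsChain (· ≤ ·) Ψ) (h : Φ ⊆ Ψ) :
    Ψ = Φ :=
  hΦ.2.2 Ψ (subset_univ Ψ) hΨ h

theorem IsFlagOf.image (hΦ : IsFlagOf univ Φ) (g : α ≃o α) : IsFlagOf univ (g '' Φ) :=
  (hΦ.isMaxChain.image g).isFlagOf

end Flags

namespace IncComplex
variable {α : Type*} [PartialOrder α] [BoundedOrder α] {n : ℤ} {rk : α → ℤ}
  (hK : IncComplex α n rk) {C Φ : Set α} {x : α}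
include hK

theorem strictMono : StrictMono rk := fun a b h => hK.rk_strictMono a b h

theorem rk_mem_Icc (x : α) : rk x ∈ Icc (-1 : ℤ) n :=
  ⟨hK.rk_bot ▸ hK.strictMono.monotone bot_le, hK.rk_top ▸ hK.strictMono.monotone le_top⟩

theorem eq_bot_of_rk_eq (h : rk x = -1) : x = ⊥ :=
  (bot_le.lt_or_eq.resolve_left fun hx => (hK.rk_bot ▸ h ▸ hK.strictMono hx).false).symm

theorem finite_of_isChain (hC : IsChain (· ≤ ·) C) : C.Finite :=
  ((finite_Icc (-1) n).subset (image_subset_iff.2 fun x _ => hK.rk_mem_Icc x)).of_finite_image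
    fun _ hx _ hy h => hC.eq_of_rk_eq hK.strictMono hx hy h

theorem isFlagOf_of_ncard_le (hC : IsChain (· ≤ ·) C) (h : (n + 2).toNat ≤ C.ncard) :
    IsFlagOf univ C := by
  obtain ⟨Φ, hCΦ, hΦ, hcard⟩ := hK.chain_flag C hC
  rwa [eq_of_subset_of_ncard_le hCΦ (hcard ▸ h) (hK.finite_of_isChain hΦ.2.1)]

theorem isFlagOf_of_forall_rk (hC : IsChain (· ≤ ·) C)
    (hrk : ∀ i ∈ Icc (-1 : ℤ) n, ∃ c ∈ C, rk c = i) : IsFlagOf univ C := by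
  refine ⟨subset_univ C, hC, fun Ψ _ hΨ hCΨ => (subset_antisymm (fun y hy => ?_) hCΨ)⟩
  obtain ⟨c, hc, hcy⟩ := hrk (rk y) (hK.rk_mem_Icc y)
  rwa [hΨ.eq_of_rk_eq hK.strictMono hy (hCΨ hc) hcy.symm]

theorem exists_lt_rk_eq_sub_one (hx : -1 < rk x) : ∃ y < x, rk y = rk x - 1 := by
  obtain ⟨Φ, hxΦ, hΦ, -⟩ := hK.chain_flag {x} (IsChain.singleton (r := (· ≤ ·)))
  obtain ⟨y, hy, hyx⟩ := hK.flag_rk Φ hΦ (rk x - 1) ⟨by omega, by linarith [(hK.rk_mem_Icc x).2]⟩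
  exact ⟨y, hΦ.2.1.lt_of_rk_lt hK.strictMono hy (hxΦ rfl) (by omega), hyx⟩

theorem rk_le_rk_of_strictMono {f : α → α} (hf : StrictMono f) (x : α) : rk x ≤ rk (f x) := by
  rcases (hK.rk_mem_Icc x).1.eq_or_lt with h | h
  · exact h ▸ (hK.rk_mem_Icc (f x)).1
  · obtain ⟨y, hyx, hy⟩ := hK.exists_lt_rk_eq_sub_one h
    have := rk_le_rk_of_strictMono hf y
    have := hK.strictMono (hf hyx)
    omega
termination_by (rk x + 1).toNat
decreasing_by omega

theorem rk_apply (g : α ≃o α) (x : α) : rk (g x) = rk x :=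
  le_antisymm (by simpa using hK.rk_le_rk_of_strictMono g.symm.strictMono (g x))
    (hK.rk_le_rk_of_strictMono g.strictMono x)

theorem apply_eq_of_image_eq {g : α ≃o α} (hΦ : IsChain (· ≤ ·) Φ) (hg : g '' Φ = Φ)
    (hx : x ∈ Φ) : g x = x :=
  hΦ.eq_of_rk_eq hK.strictMono (hg ▸ mem_image_of_mem g hx) hx (hK.rk_apply g x)

end IncComplex

section Residues
variable {α : Type*} [PartialOrder α] {rk : α → ℤ} {n : ℤ} {C C' Φ Ψ : Set α}

def ResidueStep (rk : α → ℤ) (n : ℤ) (C A B : Set α) : Prop :=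
  IsFlagOf univ A ∧ IsFlagOf univ B ∧
    ∃ i ∈ Icc (-1 : ℤ) n, (∀ c ∈ C, rk c ≠ i) ∧ ∀ x, rk x ≠ i → (x ∈ A ↔ x ∈ B)

def ResidueConnected (rk : α → ℤ) (n : ℤ) (C : Set α) : Prop :=
  ∀ Φ Ψ, IsFlagOf univ Φ → IsFlagOf univ Ψ → C ⊆ Φ → C ⊆ Ψ →
    ReflTransGen (ResidueStep rk n C) Φ Ψ

theorem ResidueStep.mono {A B : Set α} (h : C ⊆ C') (hAB : ResidueStep rk n C' A B) :
    ResidueStep rk n C A B :=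
  let ⟨hA, hB, i, hi, hC', hiAB⟩ := hAB
  ⟨hA, hB, i, hi, fun c hc => hC' c (h hc), hiAB⟩

theorem ResidueConnected.reflTransGen_of_subset (hC' : ResidueConnected rk n C') (h : C ⊆ C')
    (hΦ : IsFlagOf univ Φ) (hΨ : IsFlagOf univ Ψ) (hC'Φ : C' ⊆ Φ) (hC'Ψ : C' ⊆ Ψ) :
    ReflTransGen (ResidueStep rk n C) Φ Ψ :=
  ReflTransGen.mono (fun _ _ => ResidueStep.mono h) Φ Ψ (hC' Φ Ψ hΦ hΨ hC'Φ hC'Ψ)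

theorem IsFlagOf.residueConnected (hC : IsFlagOf univ C) : ResidueConnected rk n C :=
  fun Φ Ψ hΦ hΨ hCΦ hCΨ => by
    rw [hC.eq_of_subset hΦ.2.1 hCΦ, hC.eq_of_subset hΨ.2.1 hCΨ]

end Residues

namespace IncComplex
variable {α : Type*} [PartialOrder α] [BoundedOrder α] {n : ℤ} {rk : α → ℤ}
  (hK : IncComplex α n rk) {C Φ : Set α} {a b : α} {i : ℤ}
include hK

theorem isFlagOf_exchange (hΦ : IsFlagOf univ Φ) {x : α} (hx : rk x = i)
    (hcomp : ∀ y ∈ Φ, rk y ≠ i → y ≤ x ∨ x ≤ y) :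
    IsFlagOf univ (insert x {y ∈ Φ | rk y ≠ i}) := by
  refine hK.isFlagOf_of_forall_rk ((hΦ.2.1.mono (sep_subset _ _)).insert
    fun y hy _ => (hcomp y hy.1 hy.2).symm) fun j hj => ?_
  rcases eq_or_ne j i with rfl | hji
  · exact ⟨x, mem_insert x _, hx⟩
  · obtain ⟨y, hy, rfl⟩ := hK.flag_rk Φ hΦ j hj
    exact ⟨y, mem_insert_of_mem x ⟨hy, hji⟩, rfl⟩

theorem exists_gap (hC : IsChain (· ≤ ·) C) (hbot : ⊥ ∈ C) (htop : ⊤ ∈ C)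
    (hi : i ∈ Icc (-1 : ℤ) n) (hmiss : ∀ c ∈ C, rk c ≠ i) :
    ∃ a ∈ C, ∃ b ∈ C, rk a < i ∧ i < rk b ∧ ∀ c ∈ C, c ≤ a ∨ b ≤ c := by
  obtain ⟨_, ⟨a, ha, hai, rfl⟩, hamax⟩ := Int.exists_greatest_of_bdd
    (P := fun z => ∃ c ∈ C, rk c < i ∧ rk c = z) ⟨i, fun _ ⟨_, _, h, e⟩ => e ▸ h.le⟩
    ⟨_, ⊥, hbot, (hK.rk_bot.trans_le hi.1).lt_of_ne (hmiss ⊥ hbot), rfl⟩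
  obtain ⟨_, ⟨b, hb, hib, rfl⟩, hbmin⟩ := Int.exists_least_of_bdd
    (P := fun z => ∃ c ∈ C, i < rk c ∧ rk c = z) ⟨i, fun _ ⟨_, _, h, e⟩ => e ▸ h.le⟩
    ⟨_, ⊤, htop, (hi.2.trans_eq hK.rk_top.symm).lt_of_ne (hmiss ⊤ htop).symm, rfl⟩
  refine ⟨a, ha, b, hb, hai, hib, fun c hc => ?_⟩
  rcases (hmiss c hc).lt_or_gt with h | h
  · exact Or.inl (hC.le_of_rk_le hK.strictMono hc ha (hamax _ ⟨c, hc, h, rfl⟩))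
  · exact Or.inr (hC.le_of_rk_le hK.strictMono hb hc (hbmin _ ⟨c, hc, h, rfl⟩))

theorem rk_add_one_mem_Icc (h : rk a < rk b) : rk a + 1 ∈ Icc (-1 : ℤ) n :=
  ⟨by linarith [(hK.rk_mem_Icc a).1], by linarith [(hK.rk_mem_Icc b).2]⟩

theorem residueConnected_of_rk_eq_add_two (ha : a ∈ C) (hb : b ∈ C) (hab : rk b = rk a + 2)
    (hgap : ∀ c ∈ C, c ≤ a ∨ b ≤ c)
    (hIH : ∀ x, a < x → x < b → ResidueConnected rk n (insert x C)) :
    ResidueConnected rk n C := by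
  intro Φ Ψ hΦ hΨ hCΦ hCΨ
  have hi := hK.rk_add_one_mem_Icc (a := a) (b := b) (by omega)
  obtain ⟨x, hxΨ, hx⟩ := hK.flag_rk Ψ hΨ _ hi
  have hax : a < x := hΨ.2.1.lt_of_rk_lt hK.strictMono (hCΨ ha) hxΨ (by omega)
  have hxb : x < b := hΨ.2.1.lt_of_rk_lt hK.strictMono hxΨ (hCΨ hb) (by omega)
  have hmiss : ∀ c ∈ C, rk c ≠ rk a + 1 := fun c hc => (hgap c hc).elim
    (fun h => by have := hK.strictMono.monotone h; omega)
    (fun h => by have := hK.strictMono.monotone h; omega)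
  have hΦ' := hK.isFlagOf_exchange hΦ hx fun y hy hyx => (hyx.lt_or_gt).elim
    (fun h => Or.inl ((hΦ.2.1.le_of_rk_le hK.strictMono hy (hCΦ ha) (by omega)).trans hax.le))
    (fun h => Or.inr (hxb.le.trans (hΦ.2.1.le_of_rk_le hK.strictMono (hCΦ hb) hy (by omega))))
  refine .head ⟨hΦ, hΦ', rk a + 1, hi, hmiss, fun y hy => ?_⟩
    ((hIH x hax hxb).reflTransGen_of_subset (subset_insert x C) hΦ' hΨ
      (insert_subset_insert fun c hc => ⟨hCΦ hc, hmiss c hc⟩) (insert_subset hxΨ hCΨ))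
  simp [hy, show y ≠ x by rintro rfl; exact hy hx]

theorem residueConnected_of_strongConn (ha : a ∈ C) (hb : b ∈ C) (hab : a ≤ b)
    (hrk : 2 ≤ rk b - rk a - 1) (hgap : ∀ c ∈ C, c ≤ a ∨ b ≤ c)
    (hIH : ∀ x, a < x → x < b → ResidueConnected rk n (insert x C)) :
    ResidueConnected rk n C := by
  intro Φ Ψ hΦ hΨ hCΦ hCΨ
  have hi := hK.rk_add_one_mem_Icc (a := a) (b := b) (by omega)
  obtain ⟨H, hHΦ, hH⟩ := hK.flag_rk Φ hΦ _ hi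
  obtain ⟨K, hKΨ, hK'⟩ := hK.flag_rk Ψ hΨ _ hi
  have hC := hΦ.2.1.mono hCΦ
  suffices key : ∀ x, ReflTransGen
      (fun u v => a < u ∧ u < b ∧ a < v ∧ v < b ∧ (u ≤ v ∨ v ≤ u)) x K → a < x → x < b →
      ∀ Φ₁, IsFlagOf univ Φ₁ → insert x C ⊆ Φ₁ → ReflTransGen (ResidueStep rk n C) Φ₁ Ψ by
    have haH := hΦ.2.1.lt_of_rk_lt hK.strictMono (hCΦ ha) hHΦ (by omega)
    have hHb := hΦ.2.1.lt_of_rk_lt hK.strictMono hHΦ (hCΦ hb) (by omega)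
    have haK := hΨ.2.1.lt_of_rk_lt hK.strictMono (hCΨ ha) hKΨ (by omega)
    have hKb := hΨ.2.1.lt_of_rk_lt hK.strictMono hKΨ (hCΨ hb) (by omega)
    exact key H (hK.strong_conn a b hab hrk H K haH hHb haK hKb) haH hHb Φ hΦ
      (insert_subset hHΦ hCΦ)
  intro x hx
  induction hx using ReflTransGen.head_induction_on with
  | refl =>
    exact fun haK hKb Φ₁ hΦ₁ hCΦ₁ => (hIH K haK hKb).reflTransGen_of_subset
      (subset_insert K C) hΦ₁ hΨ hCΦ₁ (insert_subset hKΨ hCΨ)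
  | head huv _ ih =>
    obtain ⟨hau, hub, hav, hvb, huv⟩ := huv
    intro _ _ Φ₁ hΦ₁ hCΦ₁
    -- a flag through both `u` and `v` links the flags through `u` to those through `v`
    obtain ⟨Ω, hΩsub, hΩ, -⟩ := hK.chain_flag _ ((hC.insert_of_gap hgap hav hvb).insert
      fun c hc _ => hc.elim (fun h => h ▸ huv) fun hc =>
        (hgap c hc).elim (fun h => Or.inr (h.trans hau.le)) fun h => Or.inl (hub.le.trans h))
    have hvΩ : insert _ C ⊆ Ω := (subset_insert _ _).trans hΩsub
    exact ((hIH _ hau hub).reflTransGen_of_subset (subset_insert _ C) hΦ₁ hΩ hCΦ₁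
      (insert_subset (hΩsub (mem_insert _ _)) ((subset_insert _ _).trans hvΩ))).trans
      (ih hav hvb Ω hΩ hvΩ)

theorem residueConnected_of_le_ncard_add (d : ℕ) :
    ∀ C : Set α, IsChain (· ≤ ·) C → ⊥ ∈ C → ⊤ ∈ C → (n + 2).toNat ≤ C.ncard + d →
      ResidueConnected rk n C := by
  induction d with
  | zero => exact fun C hC _ _ hcard => (hK.isFlagOf_of_ncard_le hC hcard).residueConnected
  | succ d ih =>
    intro C hC hbot htop hcard
    by_cases hall : ∀ i ∈ Icc (-1 : ℤ) n, ∃ c ∈ C, rk c = i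
    · exact (hK.isFlagOf_of_forall_rk hC hall).residueConnected
    push Not at hall
    obtain ⟨i, hi, hmiss⟩ := hall
    obtain ⟨a, ha, b, hb, hai, hib, hgap⟩ := hK.exists_gap hC hbot htop hi hmiss
    have hIH : ∀ x, a < x → x < b → ResidueConnected rk n (insert x C) := fun x hax hxb =>
      ih _ (hC.insert_of_gap hgap hax hxb) (mem_insert_of_mem x hbot) (mem_insert_of_mem x htop)
        (by rw [ncard_insert_of_notMem (notMem_of_gap hgap hax hxb) (hK.finite_of_isChain hC)]
            omega)
    rcases (by omega : rk b = rk a + 2 ∨ 2 ≤ rk b - rk a - 1) with h | h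
    · exact hK.residueConnected_of_rk_eq_add_two ha hb h hgap hIH
    · exact hK.residueConnected_of_strongConn ha hb
        (hC.le_of_rk_le hK.strictMono ha hb (by omega)) h hgap hIH

theorem residueConnected (hC : IsChain (· ≤ ·) C) : ResidueConnected rk n C := by
  intro Φ Ψ hΦ hΨ hCΦ hCΨ
  have hC' : IsChain (· ≤ ·) (insert ⊥ (insert ⊤ C)) :=
    (hC.insert fun _ _ _ => Or.inr le_top).insert fun _ _ _ => Or.inl bot_le
  exact (hK.residueConnected_of_le_ncard_add _ _ hC' (mem_insert _ _)
    (mem_insert_of_mem _ (mem_insert _ _)) (Nat.le_add_left _ _)).reflTransGen_of_subset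
    ((subset_insert _ _).trans (subset_insert _ _)) hΦ hΨ
    (insert_subset hΦ.isMaxChain.bot_mem (insert_subset hΦ.isMaxChain.top_mem hCΦ))
    (insert_subset hΨ.isMaxChain.bot_mem (insert_subset hΨ.isMaxChain.top_mem hCΨ))

end IncComplex

namespace IncComplex
variable {α : Type*} [PartialOrder α] [BoundedOrder α] {n : ℤ} {rk : α → ℤ}
  (hK : IncComplex α n rk) {Γ : Subgroup (α ≃o α)} {F : ℤ → α} {Ψ : Set α} {i : ℤ}
include hK

theorem gammaI_le_inf_fixingSubgroup (hFrk : ∀ i ∈ Icc (-1 : ℤ) n, rk (F i) = i) (I : Set ℤ) :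
    GammaI Γ F n I ≤ Γ ⊓ fixingSubgroup (α ≃o α) (F '' (Icc (-1 : ℤ) n \ I)) := by
  refine (Subgroup.closure_le _).2 (union_subset ?_ (iUnion₂_subset fun i hi => ?_))
  · rintro r ⟨hr, hfix⟩
    refine ⟨hr, (mem_fixingSubgroup_iff _).2 ?_⟩
    rintro _ ⟨j, ⟨hj, -⟩, rfl⟩
    rcases eq_or_ne j (-1) with rfl | hj'
    · simp [hK.eq_bot_of_rk_eq (hFrk _ hj)]
    · exact hfix j hj hj'
  · rintro r ⟨hr, hfix⟩
    refine ⟨hr, (mem_fixingSubgroup_iff _).2 ?_⟩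
    rintro _ ⟨j, ⟨hj, hjI⟩, rfl⟩
    exact hfix j hj (ne_of_mem_of_not_mem hi hjI).symm

theorem exists_mem_rset_mul_image_eq (hΓ : FlagTrans Γ)
    (hFflag : IsFlagOf univ (F '' Icc (-1 : ℤ) n)) (hFrk : ∀ i ∈ Icc (-1 : ℤ) n, rk (F i) = i)
    {g : α ≃o α} {B : Set α} (hB : IsFlagOf univ B)
    (hgB : ∀ x, rk x ≠ i → (x ∈ g '' (F '' Icc (-1 : ℤ) n) ↔ x ∈ B)) :
    ∃ r ∈ Rset Γ F n i, ⇑(g * r) '' (F '' Icc (-1 : ℤ) n) = B := by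
  have hB' := hB.image g⁻¹
  obtain ⟨r, hr, hrB⟩ := hΓ _ _ hFflag hB'
  refine ⟨r, ⟨hr, fun j hj hji => ?_⟩, ?_⟩
  · have hFj : F j ∈ ⇑g⁻¹ '' B := ⟨g (F j), (hgB _ (by rwa [hK.rk_apply, hFrk j hj])).1
      (mem_image_of_mem g (mem_image_of_mem F hj)), RelIso.inv_apply_self g _⟩
    exact hB'.2.1.eq_of_rk_eq hK.strictMono (hrB ▸ mem_image_of_mem r (mem_image_of_mem F hj))
      hFj (hK.rk_apply r _)
  · rw [RelIso.coe_mul, image_comp, hrB, image_image]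
    simp [RelIso.apply_inv_self]

theorem exists_mem_gammaI_image_eq (hΓ : FlagTrans Γ)
    (hFflag : IsFlagOf univ (F '' Icc (-1 : ℤ) n)) (hFrk : ∀ i ∈ Icc (-1 : ℤ) n, rk (F i) = i)
    {I : Set ℤ}
    (h : ReflTransGen (ResidueStep rk n (F '' (Icc (-1 : ℤ) n \ I))) (F '' Icc (-1 : ℤ) n) Ψ) :
    ∃ g ∈ GammaI Γ F n I, ⇑g '' (F '' Icc (-1 : ℤ) n) = Ψ := by
  induction h with
  | refl => exact ⟨1, one_mem _, by simp⟩
  | tail _ hstep ih =>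
    obtain ⟨g, hg, rfl⟩ := ih
    obtain ⟨-, hB, i, hi, hmiss, hgB⟩ := hstep
    have hiI : i ∈ I := by_contra fun hiI => hmiss (F i) ⟨i, ⟨hi, hiI⟩, rfl⟩ (hFrk i hi)
    obtain ⟨r, hr, hrB⟩ := hK.exists_mem_rset_mul_image_eq hΓ hFflag hFrk hB hgB
    exact ⟨g * r, mul_mem hg (Subgroup.subset_closure (Or.inr (mem_biUnion hiI hr))), hrB⟩

theorem gammaI_eq_inf_fixingSubgroup (hΓ : FlagTrans Γ)
    (hFflag : IsFlagOf univ (F '' Icc (-1 : ℤ) n)) (hFrk : ∀ i ∈ Icc (-1 : ℤ) n, rk (F i) = i)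
    (I : Set ℤ) :
    GammaI Γ F n I = Γ ⊓ fixingSubgroup (α ≃o α) (F '' (Icc (-1 : ℤ) n \ I)) := by
  refine le_antisymm (hK.gammaI_le_inf_fixingSubgroup hFrk I) fun g hg => ?_
  obtain ⟨hgΓ, hgfix⟩ := Subgroup.mem_inf.1 hg
  have hCg : F '' (Icc (-1 : ℤ) n \ I) ⊆ g '' (F '' Icc (-1 : ℤ) n) := fun y hy =>
    ⟨y, image_mono sdiff_subset hy, by simpa using (mem_fixingSubgroup_iff _).1 hgfix y hy⟩
  obtain ⟨h, hh, hhg⟩ := hK.exists_mem_gammaI_image_eq hΓ hFflag hFrk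
    (hK.residueConnected (hFflag.2.1.mono (image_mono sdiff_subset)) _ _ hFflag (hFflag.image g)
      (image_mono sdiff_subset) hCg)
  -- `h⁻¹ * g` stabilizes the base flag, hence fixes it pointwise and lies in `R_{-1}`
  have hq : h⁻¹ * g ∈ GammaI Γ F n I := by
    refine Subgroup.subset_closure (Or.inl ⟨mul_mem (inv_mem
      (Subgroup.mem_inf.1 (hK.gammaI_le_inf_fixingSubgroup hFrk I hh)).1) hgΓ, fun j hj _ => ?_⟩)
    refine hK.apply_eq_of_image_eq hFflag.2.1 ?_ (mem_image_of_mem F hj)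
    rw [RelIso.coe_mul, image_comp, ← hhg, image_image]
    simp [RelIso.inv_apply_self]
  simpa using mul_mem hh hq

end IncComplex

theorem intersection_property_general
    {α : Type*} [PartialOrder α] [BoundedOrder α] (n : ℤ) (rk : α → ℤ)
    (hK : IncComplex α n rk)
    (Γ : Subgroup (α ≃o α)) (hΓ : FlagTrans Γ)
    (F : ℤ → α) (hFflag : IsFlagOf Set.univ (F '' Set.Icc (-1 : ℤ) n))
    (hFrk : ∀ i ∈ Set.Icc (-1 : ℤ) n, rk (F i) = i)
    (I J : Set ℤ) :
    GammaI Γ F n I ⊓ GammaI Γ F n J = GammaI Γ F n (I ∩ J) := by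
  simp only [hK.gammaI_eq_inf_fixingSubgroup hΓ hFflag hFrk, sdiff_inter, image_union,
    fixingSubgroup_union]
  exact (inf_inf_distrib_left _ _ _).symm

/-- the intersection property for the distinguished subgroups of a
flag-transitive subgroup of a regular incidence complex. -/
theorem intersection_property
    {α : Type*} [PartialOrder α] [BoundedOrder α] (n : ℤ) (rk : α → ℤ)
    (hn : 1 ≤ n) (hK : IncComplex α n rk)
    (Γ : Subgroup (α ≃o α)) (hΓ : FlagTrans Γ)
    (F : ℤ → α) (hFflag : IsFlagOf Set.univ (F '' Set.Icc (-1 : ℤ) n))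
    (hFrk : ∀ i ∈ Set.Icc (-1 : ℤ) n, rk (F i) = i)
    (I J : Set ℤ) (hI : I ⊆ Set.Icc (-1 : ℤ) n) (hJ : J ⊆ Set.Icc (-1 : ℤ) n) :
    GammaI Γ F n I ⊓ GammaI Γ F n J = GammaI Γ F n (I ∩ J) :=
  intersection_property_general n rk hK Γ hΓ F hFflag hFrk I J
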